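/- Let σ : X → Y be a strong formal subdivision between finite lower Eulerian posets X and Y with rank functions ρ_X and ρ_Y. Then X is near-Eulerian if and only if Y is near-Eulerian. Moreover, when these conditions hold, σ⁻¹(∂Y) = ∂X. -/

import Mathlib

namespace SFSPaper

variable {α β : Type*}

/-- `ρ` is a rank function: it increases by exactly one along covering relations. -/
def IsRankFunction [Preorder α] (ρ : α → ℤ) : Prop :=
  ∀ ⦃z z' : α⦄, z ⋖ z' → ρ z' = ρ z + 1

/-- `σ` is rank-increasing with respect to the rank functions `ρX` and `ρY`. -/
def RankIncreasing [Preorder α] [Preorder β] (ρX : α → ℤ) (ρY : β → ℤ) (σ : α → β) : Prop :=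
  ∀ x : α, ρX x ≤ ρY (σ x)

/-- `σ` is strongly surjective. -/
def StronglySurjective [Preorder α] [Preorder β] (ρX : α → ℤ) (ρY : β → ℤ) (σ : α → β) : Prop :=
  Function.Surjective σ ∧
    ∀ (x : α) (y : β), σ x ≤ y → ∃ x' : α, x ≤ x' ∧ ρX x' = ρY y ∧ σ x' = y

/-- The alternating sum `∑_{z ≤ w ≤ z'} (-1)^(ρ w)`. -/
noncomputable def intervalEulerSum [Preorder α] (ρ : α → ℤ) (z z' : α) : ℚ :=
  ∑ᶠ (w : α) (_ : z ≤ w ∧ w ≤ z'), (-1 : ℚ) ^ ρ w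

/-- A poset is lower Eulerian with respect to `ρ` if `ρ` is a rank function, there is a
unique minimal (i.e. least) element, and every nontrivial interval has as many elements of even
rank as of odd rank. -/
def LowerEulerian [PartialOrder α] (ρ : α → ℤ) : Prop :=
  IsRankFunction ρ ∧ (∃ b : α, ∀ z : α, b ≤ z) ∧
    ∀ z z' : α, z < z' → intervalEulerSum ρ z z' = 0

/-- Eulerian: lower Eulerian with a unique maximal element. -/
def Eulerian [PartialOrder α] (ρ : α → ℤ) : Prop :=
  LowerEulerian ρ ∧ ∃ t : α, ∀ z : α, z ≤ t

/-- Strong formal subdivision. -/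
def StrongFormalSubdivision [PartialOrder α] [PartialOrder β]
    (ρX : α → ℤ) (ρY : β → ℤ) (σ : α → β) : Prop :=
  Monotone σ ∧ RankIncreasing ρX ρY σ ∧ StronglySurjective ρX ρY σ ∧
    ∀ (x : α) (y : β), σ x ≤ y →
      (∑ᶠ (x' : α) (_ : x ≤ x' ∧ σ x' = y), (-1 : ℚ) ^ (ρY y - ρX x')) = 1

/-- `q` is join-admissible: every `z` has a join with `q`. -/
def JoinAdmissible [Preorder α] (q : α) : Prop :=
  ∀ z : α, ∃ j : α, IsLeast {w : α | z ≤ w ∧ q ≤ w} j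

/-- The rank of a poset: the maximal length of a chain `z_0 < z_1 < ⋯ < z_s`. -/
noncomputable def posetRank (α : Type*) [Preorder α] : ℕ :=
  sSup {n : ℕ | ∃ c : Fin (n + 1) → α, StrictMono c}

/-- A poset is graded if all of its maximal chains have the same length (cardinality). -/
def GradedPoset (α : Type*) [Preorder α] : Prop :=
  ∀ s t : Set α, IsMaxChain (· ≤ ·) s → IsMaxChain (· ≤ ·) t → s.ncard = t.ncard

/-- A finite poset is near-Eulerian if it is obtained from a finite Eulerian poset `E` of
positive rank by removing the maximal element `1̂_E` and a maximal element `ẑ` of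
`E ∖ {1̂_E}`. -/
def NearEulerian (α : Type*) [PartialOrder α] : Prop :=
  ∃ (E : Type) (_ : PartialOrder E) (_ : Finite E) (ρE : E → ℤ) (t zhat : E),
    Eulerian ρE ∧ (∀ z : E, z ≤ t) ∧ 0 < posetRank E ∧ zhat ≠ t ∧
    (∀ w : E, zhat ≤ w → w = zhat ∨ w = t) ∧
    Nonempty (α ≃o {w : E // w ≠ t ∧ w ≠ zhat})

/-- The boundary `∂B` of a finite poset: the lower order ideal generated by the elements
with exactly one element strictly above them. -/
def posetBoundary (α : Type*) [Preorder α] : Set α :=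
  {w : α | ∃ z : α, w ≤ z ∧ ∃! u : α, z < u}

/-!
A near-Eulerian poset `B = E ∖ {1̂, ẑ}` is described intrinsically by `r = ρ(ẑ)` and the lower
set `S = {z ≤ ẑ}`: `B ∪ {ẑ, 1̂}` is Eulerian exactly when the alternating sums
`∑_{w ≥ z, w ∈ S} (-1)^ρ(w)` and `∑_{w ≥ z} (-1)^ρ(w)` take prescribed values and the maximal
elements of `S` and of `B ∖ S` have ranks `r - 1` and `r`.
Summing over the fibres of a strong formal subdivision `σ` gives
`∑_{x' ≥ x, σ x' ∈ T} (-1)^ρX(x') = ∑_{y ≥ σ x, y ∈ T} (-1)^ρY(y)`, so this description of `Y`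
with the set `T` is equivalent to that of `X` with the set `σ⁻¹ T`; moreover `S` is always the
preimage of the set where the full upper sum vanishes. Finally `S` is the boundary: off `S` the
full upper sum is `±1`, which rules out a single element above, while a maximal element of `S`
has exactly one element above it.
-/

open Finset Classical

section Sign

variable {R : Type*} [DivisionRing R]

lemma neg_one_zpow_add_one (n : ℤ) : (-1 : R) ^ (n + 1) = -(-1) ^ n := by
  rw [zpow_add_one₀ (by norm_num), mul_neg_one]

lemma neg_one_zpow_sub (a b : ℤ) : (-1 : R) ^ (a - b) = (-1) ^ a * (-1) ^ b := by
  rcases Int.even_or_odd b with hb | hb <;> simp [zpow_sub₀, hb.neg_one_zpow, div_neg]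

lemma neg_one_zpow_mul_self (n : ℤ) : (-1 : R) ^ n * (-1) ^ n = 1 := by
  rcases Int.even_or_odd n with hn | hn <;> simp [hn.neg_one_zpow]

lemma neg_one_zpow_add_ne (a b c : ℤ) : (-1 : ℚ) ^ a + (-1) ^ b ≠ (-1) ^ c := by
  rcases Int.even_or_odd a with ha | ha <;> rcases Int.even_or_odd b with hb | hb <;>
    rcases Int.even_or_odd c with hc | hc <;>
    norm_num [ha.neg_one_zpow, hb.neg_one_zpow, hc.neg_one_zpow]

end Sign

lemma finsum_cond_eq_sum_filter {α M : Type*} [AddCommMonoid M] [Fintype α] (p : α → Prop)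
    [DecidablePred p] (f : α → M) : ∑ᶠ (i) (_ : p i), f i = ∑ i with p i, f i :=
  finsum_cond_eq_sum_of_cond_iff f (by simp)

lemma intervalEulerSum_eq_sum {α : Type*} [Preorder α] [Fintype α] (ρ : α → ℤ) (z z' : α) :
    intervalEulerSum ρ z z' = ∑ w with z ≤ w ∧ w ≤ z', (-1 : ℚ) ^ ρ w :=
  finsum_cond_eq_sum_filter _ _

noncomputable def eulerSumAbove {α : Type*} [Preorder α] [Fintype α] (ρ : α → ℤ) (T : Set α)
    (z : α) : ℚ :=
  ∑ w with z ≤ w ∧ w ∈ T, (-1 : ℚ) ^ ρ w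

lemma eulerSumAbove_univ_eq {α : Type*} [PartialOrder α] [Fintype α] (ρ : α → ℤ) (z : α) :
    eulerSumAbove ρ Set.univ z = (-1) ^ ρ z + ∑ w with z < w, (-1 : ℚ) ^ ρ w := by
  rw [eulerSumAbove, ← sum_insert (f := fun w => (-1 : ℚ) ^ ρ w)
    (by simp : z ∉ univ.filter (z < ·))]
  exact sum_congr (by ext w; simp [le_iff_eq_or_lt, eq_comm]) fun _ _ => rfl

section RankFunction

variable {α : Type*} [PartialOrder α] [Finite α] {ρ ρ' : α → ℤ}

lemma IsRankFunction.strictMono (hρ : IsRankFunction ρ) : StrictMono ρ := by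
  intro x y hxy
  induction y using WellFoundedLT.induction with
  | ind y ih =>
    obtain ⟨z, hxz, hzy⟩ := exists_le_covBy_of_lt hxy
    rw [hρ hzy]
    rcases hxz.eq_or_lt with rfl | hxz
    · omega
    · have := ih z hzy.lt hxz
      omega

lemma IsRankFunction.eq_of_forall_le (hρ : IsRankFunction ρ) (hρ' : IsRankFunction ρ') {b : α}
    (hb : ∀ z, b ≤ z) (hρb : ρ b = ρ' b) : ρ = ρ' := by
  funext z
  induction z using WellFoundedLT.induction with
  | ind z ih =>
    rcases (hb z).eq_or_lt with rfl | hbz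
    · exact hρb
    · obtain ⟨w, -, hwz⟩ := exists_le_covBy_of_lt hbz
      rw [hρ hwz, hρ' hwz, ih w hwz.lt]

end RankFunction

section EulerianInvariance

variable {α β : Type*} [PartialOrder α] [PartialOrder β] {ρ : α → ℤ}

lemma intervalEulerSum_comp_orderIso (g : β ≃o α) (ρ : α → ℤ) (z z' : β) :
    intervalEulerSum (ρ ∘ g) z z' = intervalEulerSum ρ (g z) (g z') := by
  calc ∑ᶠ (w) (_ : z ≤ w ∧ w ≤ z'), (-1 : ℚ) ^ ρ (g w)
      = ∑ᶠ (w) (_ : g z ≤ g w ∧ g w ≤ g z'), (-1 : ℚ) ^ ρ (g w) := by simp only [g.le_iff_le]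
    _ = _ := finsum_comp_equiv g.toEquiv (f := fun v => ∑ᶠ (_ : g z ≤ v ∧ v ≤ g z'), (-1 : ℚ) ^ ρ v)

lemma LowerEulerian.comp_orderIso (h : LowerEulerian ρ) (g : β ≃o α) : LowerEulerian (ρ ∘ g) := by
  obtain ⟨hρ, ⟨b, hb⟩, hsum⟩ := h
  refine ⟨fun _ _ hzz' => hρ ((apply_covBy_apply_iff g).2 hzz'),
    ⟨g.symm b, fun z => g.symm_apply_le.2 (hb _)⟩, fun z z' hzz' => ?_⟩
  rw [intervalEulerSum_comp_orderIso]
  exact hsum _ _ (g.strictMono hzz')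

lemma Eulerian.comp_orderIso (h : Eulerian ρ) (g : β ≃o α) : Eulerian (ρ ∘ g) :=
  ⟨h.1.comp_orderIso g, let ⟨t, ht⟩ := h.2; ⟨g.symm t, fun _ => g.le_symm_apply.2 (ht _)⟩⟩

lemma intervalEulerSum_add_const [Fintype α] (ρ : α → ℤ) (c : ℤ) (z z' : α) :
    intervalEulerSum (fun w => ρ w + c) z z' = (-1) ^ c * intervalEulerSum ρ z z' := by
  simp only [intervalEulerSum_eq_sum, mul_sum, zpow_add₀ (show (-1 : ℚ) ≠ 0 by norm_num),
    mul_comm]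

lemma Eulerian.add_const [Finite α] (h : Eulerian ρ) (c : ℤ) : Eulerian (fun w => ρ w + c) := by
  have := Fintype.ofFinite α
  obtain ⟨⟨hρ, hbot, hsum⟩, htop⟩ := h
  refine ⟨⟨fun _ _ hzz' => by dsimp only; rw [hρ hzz']; ring, hbot, fun z z' hzz' => ?_⟩, htop⟩
  rw [intervalEulerSum_add_const, hsum z z' hzz', mul_zero]

end EulerianInvariance

lemma posetRank_pos {α : Type*} [Preorder α] [Finite α] {a b : α} (hab : a < b) :
    0 < posetRank α := by
  have hmem : 1 ∈ {n : ℕ | ∃ c : Fin (n + 1) → α, StrictMono c} :=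
    ⟨![a, b], by simp [Fin.strictMono_iff_lt_succ, hab]⟩
  have hbdd : BddAbove {n : ℕ | ∃ c : Fin (n + 1) → α, StrictMono c} := by
    refine ⟨Nat.card α, fun n ⟨c, hc⟩ => ?_⟩
    have := Nat.card_le_card_of_injective c hc.injective
    simp only [Nat.card_eq_fintype_card, Fintype.card_fin] at this
    omega
  exact one_pos.trans_le (le_csSup hbdd hmem)

lemma nearEulerian_of_orderIso {α : Type*} [PartialOrder α] {E : Type*} [PartialOrder E]
    [Finite E] {ρE : E → ℤ} (hE : Eulerian ρE) {t zhat : E} (ht : ∀ w, w ≤ t) (hne : zhat ≠ t)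
    (hzhat : ∀ w, zhat ≤ w → w = zhat ∨ w = t) (e : α ≃o {w : E // w ≠ t ∧ w ≠ zhat}) :
    NearEulerian α := by
  let g := orderIsoShrink.{0} E
  refine ⟨Shrink.{0} E, inferInstance, inferInstance, ρE ∘ g.symm, g t, g zhat,
    hE.comp_orderIso g.symm, fun w => g.symm_apply_le.1 (ht _),
    posetRank_pos (g.strictMono ((ht zhat).lt_of_ne hne)), g.injective.ne hne,
    fun w hw => ?_, ⟨e.trans ?_⟩⟩
  · simpa [g.symm_apply_eq] using hzhat (g.symm w) (g.le_symm_apply.2 hw)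
  · exact
    { toEquiv := g.toEquiv.subtypeEquiv fun w => by simp [g.injective.ne_iff]
      map_rel_iff' := g.le_iff_le }

/-- `r` plays the role of `ρ(ẑ)` and `S` of `{z | z ≤ ẑ}`; see `HatExtension.eulerian_iff`. -/
structure IsNearEulerianBoundary {α : Type*} [PartialOrder α] [Fintype α] (ρ : α → ℤ) (r : ℤ)
    (S : Set α) : Prop where
  isLowerSet : IsLowerSet S
  nonempty : S.Nonempty
  eulerSumAbove_self : ∀ z ∈ S, eulerSumAbove ρ S z = -(-1) ^ r
  eulerSumAbove_univ : ∀ z, eulerSumAbove ρ Set.univ z = if z ∈ S then 0 else (-1) ^ r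
  rank_of_maximal_mem : ∀ z, Maximal (· ∈ S) z → ρ z = r - 1
  rank_of_maximal_not_mem : ∀ z, Maximal (· ∉ S) z → ρ z = r

namespace IsNearEulerianBoundary

variable {α : Type*} [PartialOrder α] [Fintype α] {ρ : α → ℤ} {r : ℤ} {S : Set α}

lemma rank_le (hρ : IsRankFunction ρ) (h : IsNearEulerianBoundary ρ r S) (z : α) : ρ z ≤ r := by
  obtain ⟨m, hzm, hm⟩ := Finite.exists_le_maximal (a := z) (p := fun _ => True) trivial
  have := hρ.strictMono.monotone hzm
  by_cases hmS : m ∈ S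
  · have := h.rank_of_maximal_mem m (hm.mono (fun _ _ => trivial) hmS)
    omega
  · have := h.rank_of_maximal_not_mem m (hm.mono (fun _ _ => trivial) hmS)
    omega

lemma mem_of_existsUnique_gt (h : IsNearEulerianBoundary ρ r S) {z : α} (hz : ∃! u, z < u) :
    z ∈ S := by
  obtain ⟨u, hzu, hu⟩ := hz
  by_contra hzS
  have hgt : univ.filter (z < ·) = {u} := by
    ext w
    simpa using ⟨hu w, fun hw => hw ▸ hzu⟩
  have hsum := h.eulerSumAbove_univ z
  rw [eulerSumAbove_univ_eq, hgt, sum_singleton, if_neg hzS] at hsum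
  exact neg_one_zpow_add_ne _ _ _ hsum

/-- A maximal element `w` of `S` sits just below `ẑ`, so everything above it has rank `r`; the
vanishing of the alternating sum over `{u | w ≤ u}` then counts exactly one such element. -/
lemma existsUnique_gt (hρ : IsRankFunction ρ) (h : IsNearEulerianBoundary ρ r S) {w : α}
    (hw : Maximal (· ∈ S) w) : ∃! u, w < u := by
  have hgt : ∀ u ∈ univ.filter (w < ·), (-1 : ℚ) ^ ρ u = (-1) ^ r := fun u hu => by
    have := hρ.strictMono (mem_filter.1 hu).2
    have := h.rank_le hρ u
    have := h.rank_of_maximal_mem w hw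
    rw [show ρ u = r by omega]
  have hsum := h.eulerSumAbove_univ w
  rw [eulerSumAbove_univ_eq, if_pos hw.prop, sum_congr rfl hgt, sum_const, nsmul_eq_mul,
    h.rank_of_maximal_mem w hw, ← neg_neg ((-1 : ℚ) ^ (r - 1)), ← neg_one_zpow_add_one,
    sub_add_cancel] at hsum
  have hcard : (univ.filter (w < ·)).card = 1 := by
    have : ((univ.filter (w < ·)).card - 1 : ℚ) * (-1) ^ r = 0 := by linarith
    exact_mod_cast sub_eq_zero.1 ((mul_eq_zero.1 this).resolve_right (zpow_ne_zero _ (by norm_num)))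
  obtain ⟨u, hu⟩ := card_eq_one.1 hcard
  simp only [Finset.ext_iff, mem_filter, mem_univ, true_and, mem_singleton] at hu
  exact ⟨u, (hu u).2 rfl, fun v hv => (hu v).1 hv⟩

lemma posetBoundary_eq (hρ : IsRankFunction ρ) (h : IsNearEulerianBoundary ρ r S) :
    posetBoundary α = S := by
  refine Set.Subset.antisymm
    (fun w ⟨z, hwz, hz⟩ => h.isLowerSet hwz (h.mem_of_existsUnique_gt hz)) fun z hz => ?_
  obtain ⟨w, hzw, hw⟩ := Finite.exists_le_maximal (p := (· ∈ S)) hz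
  exact ⟨w, hzw, h.existsUnique_gt hρ hw⟩

end IsNearEulerianBoundary

namespace StrongFormalSubdivision

variable {X Y : Type*} [PartialOrder X] [PartialOrder Y] {ρX : X → ℤ} {ρY : Y → ℤ} {σ : X → Y}

lemma sum_fiber [Fintype X] (hσ : StrongFormalSubdivision ρX ρY σ) {x : X} {y : Y}
    (hxy : σ x ≤ y) : ∑ x' with x ≤ x' ∧ σ x' = y, (-1 : ℚ) ^ ρX x' = (-1) ^ ρY y := by
  have h := hσ.2.2.2 x y hxy
  rw [finsum_cond_eq_sum_filter] at h
  calc ∑ x' with x ≤ x' ∧ σ x' = y, (-1 : ℚ) ^ ρX x'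
      = ∑ x' with x ≤ x' ∧ σ x' = y, (-1 : ℚ) ^ ρY y * (-1) ^ (ρY y - ρX x') :=
        sum_congr rfl fun x' _ => by
          rw [neg_one_zpow_sub, ← mul_assoc, neg_one_zpow_mul_self, one_mul]
    _ = (-1) ^ ρY y := by rw [← mul_sum, h, mul_one]

lemma eulerSumAbove_preimage [Fintype X] [Fintype Y] (hσ : StrongFormalSubdivision ρX ρY σ)
    (T : Set Y) (x : X) : eulerSumAbove ρX (σ ⁻¹' T) x = eulerSumAbove ρY T (σ x) := by
  unfold eulerSumAbove
  rw [← sum_fiberwise_of_maps_to (g := σ) (t := univ.filter fun y => σ x ≤ y ∧ y ∈ T)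
    fun x' hx' => by simpa using ⟨hσ.1 (mem_filter.1 hx').2.1, (mem_filter.1 hx').2.2⟩]
  refine sum_congr rfl fun y hy => ?_
  have hy : σ x ≤ y ∧ y ∈ T := by simpa using hy
  rw [filter_filter, ← hσ.sum_fiber hy.1]
  refine sum_congr (ext fun x' => ?_) fun _ _ => rfl
  simp only [mem_filter, mem_univ, true_and, Set.mem_preimage]
  exact ⟨fun h => ⟨h.1.1, h.2⟩, fun h => ⟨⟨h.1, h.2 ▸ hy.2⟩, h.2⟩⟩

lemma isLowerSet_preimage_iff (hσ : StrongFormalSubdivision ρX ρY σ) {T : Set Y} :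
    IsLowerSet (σ ⁻¹' T) ↔ IsLowerSet T := by
  obtain ⟨hmono, -, ⟨hsurj, hlift⟩, -⟩ := hσ
  refine ⟨fun h y y' hy'y hy => ?_, fun h => h.preimage hmono⟩
  obtain ⟨x', rfl⟩ := hsurj y'
  obtain ⟨x, hx'x, -, rfl⟩ := hlift x' y hy'y
  exact h hx'x hy

lemma maximal_comp_iff [Finite X] (hσ : StrongFormalSubdivision ρX ρY σ)
    (hρX : IsRankFunction ρX) {P : Y → Prop} {x : X} :
    Maximal (P ∘ σ) x ↔ Maximal P (σ x) ∧ ρX x = ρY (σ x) := by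
  obtain ⟨hmono, hrank, ⟨-, hlift⟩, -⟩ := hσ
  constructor
  · intro hx
    refine ⟨⟨hx.prop, fun y hy hxy => ?_⟩, ?_⟩
    · obtain ⟨x', hxx', -, rfl⟩ := hlift x y hxy
      exact hmono (hx.2 hy hxx')
    · obtain ⟨x', hxx', hρ, hσx'⟩ := hlift x (σ x) le_rfl
      rwa [← hx.eq_of_ge (show P (σ x') from hσx' ▸ hx.prop) hxx', hσx']
  · rintro ⟨hy, hρ⟩
    refine ⟨hy.prop, fun x' hx' hxx' => ?_⟩
    have hle : ρX x' ≤ ρX x :=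
      calc ρX x' ≤ ρY (σ x') := hrank x'
        _ = ρY (σ x) := by rw [hy.eq_of_ge hx' (hmono hxx')]
        _ = ρX x := hρ.symm
    exact (hxx'.eq_of_not_lt fun hlt => (hρX.strictMono hlt).not_ge hle).ge

lemma forall_maximal_comp_iff [Finite X] (hσ : StrongFormalSubdivision ρX ρY σ)
    (hρX : IsRankFunction ρX) (P : Y → Prop) (c : ℤ) :
    (∀ x, Maximal (P ∘ σ) x → ρX x = c) ↔ ∀ y, Maximal P y → ρY y = c := by
  obtain ⟨hsurj, hlift⟩ := hσ.2.2.1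
  constructor
  · intro h y hy
    obtain ⟨x, hx⟩ := hsurj y
    obtain ⟨x', -, hρ, rfl⟩ := hlift x y hx.le
    rw [← hρ]
    exact h x' ((hσ.maximal_comp_iff hρX).2 ⟨hy, hρ⟩)
  · intro h x hx
    obtain ⟨hy, hρ⟩ := (hσ.maximal_comp_iff hρX).1 hx
    rw [hρ]
    exact h _ hy

variable [Fintype X] [Fintype Y]

lemma isNearEulerianBoundary_preimage_iff (hσ : StrongFormalSubdivision ρX ρY σ)
    (hρX : IsRankFunction ρX) {r : ℤ} {T : Set Y} :
    IsNearEulerianBoundary ρX r (σ ⁻¹' T) ↔ IsNearEulerianBoundary ρY r T := by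
  have hsurj := hσ.2.2.1.1
  have hmem := hσ.forall_maximal_comp_iff hρX (· ∈ T) (r - 1)
  have hnot := hσ.forall_maximal_comp_iff hρX (· ∉ T) r
  constructor
  · rintro ⟨h1, h2, h3, h4, h5, h6⟩
    refine ⟨hσ.isLowerSet_preimage_iff.1 h1, hsurj.nonempty_preimage.1 h2,
      hsurj.forall.2 fun x hx => ?_, hsurj.forall.2 fun x => ?_, hmem.1 h5, hnot.1 h6⟩
    · rw [← hσ.eulerSumAbove_preimage]
      exact h3 x hx
    · rw [← hσ.eulerSumAbove_preimage, Set.preimage_univ]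
      exact h4 x
  · rintro ⟨h1, h2, h3, h4, h5, h6⟩
    refine ⟨hσ.isLowerSet_preimage_iff.2 h1, hsurj.nonempty_preimage.2 h2, fun x hx => ?_,
      fun x => ?_, hmem.2 h5, hnot.2 h6⟩
    · rw [hσ.eulerSumAbove_preimage]
      exact h3 _ hx
    · have := h4 (σ x)
      rwa [← hσ.eulerSumAbove_preimage, Set.preimage_univ] at this

lemma preimage_eulerSumAbove_eq_zero (hσ : StrongFormalSubdivision ρX ρY σ) {r : ℤ} {S : Set X}
    (h : IsNearEulerianBoundary ρX r S) :
    σ ⁻¹' {y | eulerSumAbove ρY Set.univ y = 0} = S := by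
  ext x
  change eulerSumAbove ρY Set.univ (σ x) = 0 ↔ x ∈ S
  rw [← hσ.eulerSumAbove_preimage, Set.preimage_univ, h.eulerSumAbove_univ]
  split_ifs with hx <;> simp [hx, zpow_ne_zero]

end StrongFormalSubdivision

lemma IsNearEulerianBoundary.map {X Y : Type*} [PartialOrder X] [PartialOrder Y] [Fintype X]
    [Fintype Y] {ρX : X → ℤ} {ρY : Y → ℤ} {σ : X → Y} {r : ℤ} {S : Set X}
    (h : IsNearEulerianBoundary ρX r S) (hσ : StrongFormalSubdivision ρX ρY σ)
    (hρX : IsRankFunction ρX) :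
    IsNearEulerianBoundary ρY r {y | eulerSumAbove ρY Set.univ y = 0} := by
  rw [← hσ.isNearEulerianBoundary_preimage_iff hρX, hσ.preimage_eulerSumAbove_eq_zero h]
  exact h

/-- The poset `B ∪ {ẑ, 1̂}`, with `ẑ` placed above the lower set `L` and `1̂` above everything. -/
inductive HatExtension {B : Type*} [LE B] (L : LowerSet B) where
  | elt : B → HatExtension L
  | zhat : HatExtension L
  | oneHat : HatExtension L

namespace HatExtension

variable {B : Type*} [PartialOrder B] {L : LowerSet B}

protected def le : HatExtension L → HatExtension L → Prop
  | elt a, elt b => a ≤ b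
  | elt a, zhat => a ∈ L
  | _, oneHat => True
  | zhat, zhat => True
  | _, _ => False

instance : PartialOrder (HatExtension L) where
  le := HatExtension.le
  le_refl x := by cases x <;> first | exact le_refl (α := B) _ | trivial
  le_trans x y z h1 h2 := by
    cases x <;> cases y <;> cases z <;>
      first
        | trivial
        | exact le_trans (α := B) h1 h2
        | exact L.lower h1 h2
  le_antisymm x y h1 h2 := by
    cases x <;> cases y <;>
      first
        | rfl
        | exact congrArg elt (le_antisymm h1 h2)
        | exact (h1 : False).elim
        | exact (h2 : False).elim

instance : OrderTop (HatExtension L) where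
  top := oneHat
  le_top x := by cases x <;> trivial

@[simp] lemma oneHat_eq_top : (oneHat : HatExtension L) = ⊤ := rfl

@[simp] lemma elt_le_elt {a b : B} : (elt a : HatExtension L) ≤ elt b ↔ a ≤ b := Iff.rfl

@[simp] lemma elt_le_zhat {a : B} : (elt a : HatExtension L) ≤ zhat ↔ a ∈ L := Iff.rfl

@[simp] lemma not_zhat_le_elt {a : B} : ¬ (zhat : HatExtension L) ≤ elt a := id

@[simp] lemma not_top_le_elt {a : B} : ¬ (⊤ : HatExtension L) ≤ elt a := id

@[simp] lemma not_top_le_zhat : ¬ (⊤ : HatExtension L) ≤ zhat := id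

@[simp] lemma elt_lt_elt {a b : B} : (elt a : HatExtension L) < elt b ↔ a < b := by
  simp [lt_iff_le_not_ge]

@[simp] lemma elt_lt_zhat {a : B} : (elt a : HatExtension L) < zhat ↔ a ∈ L := by
  simp [lt_iff_le_not_ge]

@[simp] lemma elt_lt_top (a : B) : (elt a : HatExtension L) < ⊤ := by
  simp [lt_iff_le_not_ge]

@[simp] lemma zhat_lt_top : (zhat : HatExtension L) < ⊤ := by
  simp [lt_iff_le_not_ge]

lemma elt_covBy_elt {a b : B} : (elt a : HatExtension L) ⋖ elt b ↔ a ⋖ b := by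
  refine ⟨fun h => ⟨elt_lt_elt.1 h.1, fun c h1 h2 => h.2 (elt_lt_elt.2 h1) (elt_lt_elt.2 h2)⟩,
    fun h => ⟨elt_lt_elt.2 h.1, fun c h1 h2 => ?_⟩⟩
  rcases c with c | - | -
  · exact h.2 (elt_lt_elt.1 h1) (elt_lt_elt.1 h2)
  · exact not_zhat_le_elt h2.le
  · exact not_top_le_elt h2.le

lemma elt_covBy_zhat {a : B} : (elt a : HatExtension L) ⋖ zhat ↔ Maximal (· ∈ L) a := by
  refine ⟨fun h => ⟨elt_lt_zhat.1 h.1, fun b hb hab => ?_⟩,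
    fun h => ⟨elt_lt_zhat.2 h.prop, fun c h1 h2 => ?_⟩⟩
  · rcases hab.lt_or_eq with hab | rfl
    · exact (h.2 (elt_lt_elt.2 hab) (elt_lt_zhat.2 hb)).elim
    · exact le_rfl
  · rcases c with c | - | -
    · exact h.not_gt (elt_lt_zhat.1 h2) (elt_lt_elt.1 h1)
    · exact lt_irrefl _ h2
    · exact not_top_le_zhat h2.le

lemma elt_covBy_top {a : B} : (elt a : HatExtension L) ⋖ ⊤ ↔ Maximal (· ∉ L) a := by
  refine ⟨fun h => ⟨fun ha => h.2 (elt_lt_zhat.2 ha) zhat_lt_top, fun b hb hab => ?_⟩,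
    fun h => ⟨elt_lt_top a, fun c h1 h2 => ?_⟩⟩
  · rcases hab.lt_or_eq with hab | rfl
    · exact (h.2 (elt_lt_elt.2 hab) (elt_lt_top b)).elim
    · exact le_rfl
  · rcases c with c | - | -
    · have hac := elt_lt_elt.1 h1
      exact h.not_gt (fun hc => h.prop (L.lower hac.le hc)) hac
    · exact h.prop (elt_lt_zhat.1 h1)
    · exact lt_irrefl _ h2

lemma zhat_covBy_top : (zhat : HatExtension L) ⋖ ⊤ := by
  refine ⟨zhat_lt_top, fun c h1 h2 => ?_⟩
  rcases c with c | - | -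
  · exact not_zhat_le_elt h1.le
  · exact lt_irrefl _ h1
  · exact lt_irrefl _ h2

lemma isRankFunction_iff (ρE : HatExtension L → ℤ) :
    IsRankFunction ρE ↔ IsRankFunction (ρE ∘ elt) ∧
      (∀ a, Maximal (· ∈ L) a → ρE zhat = ρE (elt a) + 1) ∧
      (∀ a, Maximal (· ∉ L) a → ρE ⊤ = ρE (elt a) + 1) ∧ ρE ⊤ = ρE zhat + 1 := by
  refine ⟨fun h => ⟨fun a b hab => h (elt_covBy_elt.2 hab), fun a ha => h (elt_covBy_zhat.2 ha),
    fun a ha => h (elt_covBy_top.2 ha), h zhat_covBy_top⟩, ?_⟩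
  rintro ⟨h1, h2, h3, h4⟩ (a | - | -) (b | - | -) hcov
  · exact h1 (elt_covBy_elt.1 hcov)
  · exact h2 a (elt_covBy_zhat.1 hcov)
  · exact h3 a (elt_covBy_top.1 hcov)
  · exact absurd hcov.1.le not_zhat_le_elt
  · exact absurd hcov.1 (lt_irrefl _)
  · exact h4
  · exact absurd hcov.1.le not_top_le_elt
  · exact absurd hcov.1.le not_top_le_zhat
  · exact absurd hcov.1 (lt_irrefl _)

lemma exists_forall_le_iff [Nonempty B] :
    (∃ m : HatExtension L, ∀ w, m ≤ w) ↔ (∃ b : B, ∀ c, b ≤ c) ∧ (L : Set B).Nonempty := by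
  constructor
  · rintro ⟨a | - | -, ha⟩
    · exact ⟨⟨a, fun c => ha (elt c)⟩, a, ha zhat⟩
    · exact absurd (ha (elt (Classical.arbitrary B))) not_zhat_le_elt
    · exact absurd (ha zhat) not_top_le_zhat
  · rintro ⟨⟨b, hb⟩, a, ha⟩
    refine ⟨elt b, fun w => ?_⟩
    rcases w with c | - | -
    · exact hb c
    · exact L.lower (hb a) ha
    · exact le_top

def extendRank (ρ : B → ℤ) (r : ℤ) : HatExtension L → ℤ
  | elt b => ρ b
  | zhat => r
  | oneHat => r + 1

lemma eq_zhat_or_eq_top_of_zhat_le {w : HatExtension L} (hw : zhat ≤ w) : w = zhat ∨ w = ⊤ := by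
  rcases w with b | - | -
  · exact absurd hw not_zhat_le_elt
  · exact Or.inl rfl
  · exact Or.inr rfl

noncomputable def eltOrderIso : B ≃o {w : HatExtension L // w ≠ ⊤ ∧ w ≠ zhat} :=
  OrderIso.ofSurjective
    (OrderEmbedding.ofMapLEIff (fun b => ⟨elt b, nofun, nofun⟩) fun _ _ => elt_le_elt) <| by
      rintro ⟨b | - | -, hw⟩
      · exact ⟨b, rfl⟩
      · exact absurd rfl hw.2
      · exact absurd rfl hw.1

section Lift

variable {E : Type*} [PartialOrder E] {t z : E}

def lift (e : B ≃o {w : E // w ≠ t ∧ w ≠ z}) : HatExtension L → E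
  | elt b => e b
  | zhat => z
  | oneHat => t

lemma lift_le_lift_iff (ht : ∀ w, w ≤ t) (hzt : z ≠ t) (hz : ∀ w, z ≤ w → w = z ∨ w = t)
    (e : B ≃o {w : E // w ≠ t ∧ w ≠ z}) (hL : ∀ b, b ∈ L ↔ (e b : E) ≤ z)
    (x y : HatExtension L) : lift e x ≤ lift e y ↔ x ≤ y := by
  have hzt' : ¬ t ≤ z := fun h => hzt (le_antisymm (ht z) h)
  have hez : ∀ b, ¬ z ≤ e b := fun b h => by
    rcases hz _ h with h | h
    exacts [(e b).2.2 h, (e b).2.1 h]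
  have het : ∀ b, ¬ t ≤ e b := fun b h => (e b).2.1 (le_antisymm (ht _) h)
  rcases x with a | - | - <;> rcases y with b | - | - <;>
    simp [lift, hL, hez, het, hzt', ht, Subtype.coe_le_coe, e.le_iff_le]

lemma lift_surjective (e : B ≃o {w : E // w ≠ t ∧ w ≠ z}) :
    Function.Surjective (lift (L := L) e) := by
  intro w
  by_cases hwt : w = t
  · exact ⟨oneHat, hwt.symm⟩
  by_cases hwz : w = z
  · exact ⟨zhat, hwz.symm⟩
  exact ⟨elt (e.symm ⟨w, hwt, hwz⟩), by simp [lift]⟩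

end Lift

def equivOption : HatExtension L ≃ Option (Option B) where
  toFun
    | elt b => some (some b)
    | zhat => some none
    | oneHat => none
  invFun
    | some (some b) => elt b
    | some none => zhat
    | none => oneHat
  left_inv x := by cases x <;> rfl
  right_inv o := by rcases o with _ | _ | _ <;> rfl

noncomputable instance [Fintype B] : Fintype (HatExtension L) :=
  Fintype.ofEquiv _ equivOption.symm

section Sums

variable [Fintype B]

lemma sum_eq {M : Type*} [AddCommMonoid M] (f : HatExtension L → M) :
    ∑ w, f w = ∑ b, f (elt b) + f zhat + f ⊤ := by
  rw [← equivOption.symm.sum_comp, Fintype.sum_option, Fintype.sum_option]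
  show f ⊤ + (f zhat + ∑ b, f (elt b)) = _
  abel

lemma sum_filter_eq {M : Type*} [AddCommMonoid M] (p : HatExtension L → Prop) [DecidablePred p]
    (f : HatExtension L → M) :
    ∑ w with p w, f w = ∑ b with p (elt b), f (elt b) + (if p zhat then f zhat else 0) +
      (if p ⊤ then f ⊤ else 0) := by
  simp only [sum_filter, sum_eq]

variable (ρE : HatExtension L → ℤ)

lemma intervalEulerSum_elt_elt (a b : B) :
    intervalEulerSum ρE (elt a) (elt b) = intervalEulerSum (ρE ∘ elt) a b := by
  rw [intervalEulerSum_eq_sum, intervalEulerSum_eq_sum, sum_filter_eq]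
  simp

lemma intervalEulerSum_elt_zhat {a : B} (ha : a ∈ L) :
    intervalEulerSum ρE (elt a) zhat = eulerSumAbove (ρE ∘ elt) L a + (-1) ^ ρE zhat := by
  rw [intervalEulerSum_eq_sum, sum_filter_eq]
  simp [eulerSumAbove, ha]

lemma intervalEulerSum_elt_top (a : B) :
    intervalEulerSum ρE (elt a) ⊤ = eulerSumAbove (ρE ∘ elt) Set.univ a +
      (if a ∈ L then (-1) ^ ρE zhat else 0) + (-1) ^ ρE ⊤ := by
  rw [intervalEulerSum_eq_sum, sum_filter_eq]
  simp [eulerSumAbove]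

lemma intervalEulerSum_zhat_top :
    intervalEulerSum ρE zhat ⊤ = (-1) ^ ρE zhat + (-1) ^ ρE ⊤ := by
  rw [intervalEulerSum_eq_sum, sum_filter_eq]
  simp

lemma forall_intervalEulerSum_eq_zero_iff :
    (∀ w w' : HatExtension L, w < w' → intervalEulerSum ρE w w' = 0) ↔
      (∀ a b, a < b → intervalEulerSum (ρE ∘ elt) a b = 0) ∧
      (∀ a ∈ L, eulerSumAbove (ρE ∘ elt) L a + (-1) ^ ρE zhat = 0) ∧
      (∀ a, eulerSumAbove (ρE ∘ elt) Set.univ a + (if a ∈ L then (-1) ^ ρE zhat else 0) +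
        (-1) ^ ρE ⊤ = 0) ∧
      (-1 : ℚ) ^ ρE zhat + (-1) ^ ρE ⊤ = 0 := by
  constructor
  · intro h
    refine ⟨fun a b hab => ?_, fun a ha => ?_, fun a => ?_, ?_⟩
    · rw [← intervalEulerSum_elt_elt]
      exact h _ _ (elt_lt_elt.2 hab)
    · rw [← intervalEulerSum_elt_zhat ρE ha]
      exact h _ _ (elt_lt_zhat.2 ha)
    · rw [← intervalEulerSum_elt_top]
      exact h _ _ (elt_lt_top a)
    · rw [← intervalEulerSum_zhat_top]
      exact h _ _ zhat_lt_top
  · rintro ⟨h1, h2, h3, h4⟩ (a | - | -) (b | - | -) hlt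
    · rw [intervalEulerSum_elt_elt]
      exact h1 a b (elt_lt_elt.1 hlt)
    · rw [intervalEulerSum_elt_zhat ρE (elt_lt_zhat.1 hlt)]
      exact h2 a (elt_lt_zhat.1 hlt)
    · exact (intervalEulerSum_elt_top ρE a).trans (h3 a)
    · exact absurd hlt.le not_zhat_le_elt
    · exact absurd hlt (lt_irrefl _)
    · exact (intervalEulerSum_zhat_top ρE).trans h4
    · exact absurd hlt.le not_top_le_elt
    · exact absurd hlt.le not_top_le_zhat
    · exact absurd hlt (lt_irrefl _)

lemma eulerian_iff [Nonempty B] :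
    Eulerian ρE ↔ LowerEulerian (ρE ∘ elt) ∧ IsNearEulerianBoundary (ρE ∘ elt) (ρE zhat) L ∧
      ρE ⊤ = ρE zhat + 1 := by
  have htop : ∃ t : HatExtension L, ∀ w, w ≤ t := ⟨⊤, fun _ => le_top⟩
  simp only [Eulerian, LowerEulerian, htop, and_true, isRankFunction_iff, exists_forall_le_iff,
    forall_intervalEulerSum_eq_zero_iff]
  constructor
  · rintro ⟨⟨hρ, hzhat, htop, hzt⟩, ⟨hb, hL⟩, hsum, hsumL, hsumUniv, -⟩
    have hs : (-1 : ℚ) ^ ρE ⊤ = -(-1) ^ ρE zhat := by rw [hzt, neg_one_zpow_add_one]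
    refine ⟨⟨hρ, hb, hsum⟩, ⟨L.lower, hL, fun a ha => ?_, fun a => ?_, fun a ha => ?_,
      fun a ha => ?_⟩, hzt⟩
    · linarith [hsumL a ha]
    · have := hsumUniv a
      simp only [SetLike.mem_coe]
      split_ifs at this ⊢ <;> linarith
    · have := hzhat a ha
      simp only [Function.comp_apply]
      omega
    · have := htop a ha
      simp only [Function.comp_apply]
      omega
  · rintro ⟨⟨hρ, hb, hsum⟩, ⟨-, hL, hsumL, hsumUniv, hmem, hnot⟩, hzt⟩
    have hs : (-1 : ℚ) ^ ρE ⊤ = -(-1) ^ ρE zhat := by rw [hzt, neg_one_zpow_add_one]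
    refine ⟨⟨hρ, fun a ha => ?_, fun a ha => ?_, hzt⟩, ⟨hb, hL⟩, hsum, fun a ha => ?_,
      fun a => ?_, by rw [hs]; ring⟩
    · have := hmem a ha
      simp only [Function.comp_apply] at this
      omega
    · have := hnot a ha
      simp only [Function.comp_apply] at this
      omega
    · rw [hsumL a ha]
      ring
    · rw [hsumUniv a, hs]
      simp only [SetLike.mem_coe]
      split_ifs <;> ring

end Sums

end HatExtension

open HatExtension

lemma IsNearEulerianBoundary.nearEulerian {B : Type*} [PartialOrder B] [Fintype B] {ρ : B → ℤ}
    {r : ℤ} {S : Set B} (hB : LowerEulerian ρ) (h : IsNearEulerianBoundary ρ r S) :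
    NearEulerian B := by
  let L : LowerSet B := ⟨S, h.isLowerSet⟩
  have : Nonempty B := h.nonempty.to_subtype.map Subtype.val
  have hE : Eulerian (extendRank ρ r : HatExtension L → ℤ) := (eulerian_iff _).2 ⟨hB, h, rfl⟩
  exact nearEulerian_of_orderIso hE (fun _ => le_top) zhat_lt_top.ne
    (fun _ => eq_zhat_or_eq_top_of_zhat_le) eltOrderIso

lemma NearEulerian.exists_isNearEulerianBoundary {B : Type*} [PartialOrder B] [Fintype B]
    {ρ : B → ℤ} (hB : LowerEulerian ρ) (h : NearEulerian B) :
    ∃ r S, IsNearEulerianBoundary ρ r S := by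
  obtain ⟨E, _, _, ρE, t, z, hE, ht, -, hzt, hz, ⟨e⟩⟩ := h
  let L : LowerSet B :=
    ⟨{b | (e b : E) ≤ z}, fun _ _ hab hb => le_trans (α := E) (e.monotone hab) hb⟩
  let φ : HatExtension L ≃o E := OrderIso.ofSurjective
    (OrderEmbedding.ofMapLEIff _ (lift_le_lift_iff ht hzt hz e fun _ => Iff.rfl))
    (lift_surjective e)
  obtain ⟨b, hb⟩ := hB.2.1
  have : Nonempty B := ⟨b⟩
  -- shifted to agree with `ρ` at the least element, hence on all of `B`
  let ρ' : HatExtension L → ℤ := fun w => ρE (φ w) + (ρ b - ρE (φ (elt b)))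
  obtain ⟨hρ', hS, -⟩ := (eulerian_iff ρ').1 ((hE.comp_orderIso φ).add_const _)
  have : ρ' ∘ elt = ρ := hρ'.1.eq_of_forall_le hB.1 hb (by simp [ρ'])
  exact ⟨_, _, this ▸ hS⟩

/-- For a strong formal subdivision `σ : X → Y` between finite lower
Eulerian posets, `X` is near-Eulerian iff `Y` is near-Eulerian; and in that case
`σ⁻¹(∂Y) = ∂X`. -/
theorem nearEulerian_iff_and_boundary {X Y : Type*} [PartialOrder X] [PartialOrder Y]
    [Finite X] [Finite Y]
    (ρX : X → ℤ) (ρY : Y → ℤ)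
    (hX : LowerEulerian ρX) (hY : LowerEulerian ρY)
    (σ : X → Y) (hσ : StrongFormalSubdivision ρX ρY σ) :
    (NearEulerian X ↔ NearEulerian Y) ∧
    (NearEulerian X → NearEulerian Y → σ ⁻¹' posetBoundary Y = posetBoundary X) := by
  have := Fintype.ofFinite X
  have := Fintype.ofFinite Y
  refine ⟨⟨fun hNE => ?_, fun hNE => ?_⟩, fun hNE _ => ?_⟩
  · obtain ⟨r, S, h⟩ := hNE.exists_isNearEulerianBoundary hX
    exact (h.map hσ hX.1).nearEulerian hY
  · obtain ⟨r, T, h⟩ := hNE.exists_isNearEulerianBoundary hY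
    exact ((hσ.isNearEulerianBoundary_preimage_iff hX.1).2 h).nearEulerian hX
  · obtain ⟨r, S, h⟩ := hNE.exists_isNearEulerianBoundary hX
    rw [(h.map hσ hX.1).posetBoundary_eq hY.1, h.posetBoundary_eq hX.1,
      hσ.preimage_eulerSumAbove_eq_zero h]

end SFSPaper
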